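/- Fix integers ℓ ≥ 2 and p ≥ 2 and indices i_1 > i_2 ≥ 0. Let a_1 ≥ 1 and a_2 ≥ 1, with a_2 ≤ ℓ if i_2 = 0 and a_2 ≤ p if i_2 ≥ 1. Set n = a_1·p^{(i_1)} + a_2·p^{(i_2)} − 2. Say M ⊵ K when every (ℓ,p)-digit of M is greater than or equal to the corresponding (ℓ,p)-digit of K. Then for every k with 0 ≤ k ≤ a_2·p^{(i_2)} − 1, writing k = Σ_{i=0}^{i_2} k_i·p^{(i)} for its (ℓ,p)-digits, one has (n+1−k) ⊵ k if and only if 2·k_0 ≤ ℓ−1, 2·k_i ≤ p−1 for all 0 < i < i_2, and 2·k_{i_2} ≤ a_2 − 1. -/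

import Mathlib

/-!
Writing `A = a₂·p^{(i₂)}`, we have `n + 1 - k = a₁·p^{(i₁)} + (A - 1 - k)`, and the first summand
is a multiple of `p^{(i₂+1)}`, so it does not affect the digits at positions `≤ i₂`. The digits of
`A - 1` are `ℓ - 1, p - 1, …, p - 1, a₂ - 1`, all maximal except the top one, and `k < A`, so
subtracting `k` from `A - 1` never borrows: the `i`-th digits of `n + 1 - k` and of `k` add up to the
`i`-th digit of `A - 1`. Dominance at position `i` then says exactly that twice the digit of `k`
is at most that digit of `A - 1`; above `i₂` the digits of `k` vanish.
-/

/-- `p^{(i)}`: `p^{(0)} = 1` and `p^{(i)} = ℓ·p^{i−1}` for `i ≥ 1`. -/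
def plpow (ℓ p i : ℕ) : ℕ := if i = 0 then 1 else ℓ * p ^ (i - 1)

/-- The `i`-th `(ℓ,p)`-digit of `N`, so that `N = ∑ i, pldig ℓ p N i * plpow ℓ p i`
with `0 ≤ N_0 < ℓ` and `0 ≤ N_i < p` for `i ≥ 1`. -/
def pldig (ℓ p N i : ℕ) : ℕ := if i = 0 then N % ℓ else (N / ℓ / p ^ (i - 1)) % p

/-- `n[S] = n − 2·∑_{i ∈ S} n_i·p^{(i)}`, where `n_i` are the `(ℓ,p)`-digits of `n+1`. -/
def nSub (ℓ p n : ℕ) (S : Finset ℕ) : ℕ :=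
  n - 2 * ∑ i ∈ S, pldig ℓ p (n + 1) i * plpow ℓ p i

theorem Nat.mul_sub_one_sub_div_mod {a d x : ℕ} (hx : x < a * d) :
    (a * d - 1 - x) / d = a - 1 - x / d ∧ (a * d - 1 - x) % d = d - 1 - x % d := by
  have hd : 0 < d := Nat.pos_of_mul_pos_left (Nat.zero_lt_of_lt hx)
  have hr : x % d < d := Nat.mod_lt x hd
  obtain ⟨s, rfl⟩ : ∃ s, a = x / d + 1 + s := ⟨a - (x / d + 1), by
    have := Nat.div_lt_of_lt_mul (Nat.mul_comm a d ▸ hx); omega⟩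
  have hsplit : (x / d + 1 + s) * d - 1 - x = (d - 1 - x % d) + s * d := by
    have := Nat.div_add_mod' x d
    rw [Nat.add_mul, Nat.add_mul, Nat.one_mul]; omega
  rw [hsplit, Nat.add_mul_div_right _ _ hd, Nat.add_mul_mod_self_right,
    Nat.div_eq_of_lt (by omega), Nat.mod_eq_of_lt (by omega)]
  omega

def plbase (ℓ p i : ℕ) : ℕ := if i = 0 then ℓ else p

section
variable {ℓ p : ℕ}

theorem plpow_succ (i : ℕ) : plpow ℓ p (i + 1) = plpow ℓ p i * plbase ℓ p i := by
  rcases i with _ | i <;> simp [plpow, plbase, pow_succ, Nat.mul_assoc]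

theorem pldig_eq_div_mod (N i : ℕ) : pldig ℓ p N i = N / plpow ℓ p i % plbase ℓ p i := by
  rcases i with _ | i <;> simp [pldig, plpow, plbase, Nat.div_div_eq_div_mul]

theorem plpow_pos (hℓ : 0 < ℓ) (hp : 0 < p) (i : ℕ) : 0 < plpow ℓ p i := by
  unfold plpow; split_ifs <;> positivity

theorem plpow_dvd_plpow {i j : ℕ} (hij : i ≤ j) : plpow ℓ p i ∣ plpow ℓ p j := by
  induction j, hij using Nat.le_induction with
  | base => rfl
  | succ j _ ih => exact plpow_succ (ℓ := ℓ) (p := p) j ▸ ih.mul_right _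

theorem pldig_add_mul_plpow (hℓ : 0 < ℓ) (hp : 0 < p) {i j : ℕ} (hij : i < j) (N c : ℕ) :
    pldig ℓ p (N + c * plpow ℓ p j) i = pldig ℓ p N i := by
  obtain ⟨t, ht⟩ := plpow_dvd_plpow (ℓ := ℓ) (p := p) hij
  rw [plpow_succ] at ht
  rw [pldig_eq_div_mod, pldig_eq_div_mod, ht,
    show c * (plpow ℓ p i * plbase ℓ p i * t) = c * t * plbase ℓ p i * plpow ℓ p i by ring,
    Nat.add_mul_div_right _ _ (plpow_pos hℓ hp i), Nat.add_mul_mod_self_right]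

theorem pldig_eq_zero_of_lt_plpow {N i : ℕ} (hN : N < plpow ℓ p i) :
    pldig ℓ p N i = 0 := by
  rw [pldig_eq_div_mod, Nat.div_eq_of_lt hN, Nat.zero_mod]

theorem pldig_mul_plpow_sub_one_sub_add_pldig (hℓ : 0 < ℓ) (hp : 0 < p) {a j x : ℕ}
    (ha : a ≤ plbase ℓ p j) (hx : x < a * plpow ℓ p j) {i : ℕ} (hij : i ≤ j) :
    pldig ℓ p (a * plpow ℓ p j - 1 - x) i + pldig ℓ p x i =
      if i = j then a - 1 else plbase ℓ p i - 1 := by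
  rw [pldig_eq_div_mod, pldig_eq_div_mod]
  have hd := plpow_pos hℓ hp i
  rcases hij.lt_or_eq with hij | rfl
  · obtain ⟨t, ht⟩ := plpow_dvd_plpow (ℓ := ℓ) (p := p) hij
    rw [plpow_succ] at ht
    set b := plbase ℓ p i
    have hab : a * plpow ℓ p j = a * t * b * plpow ℓ p i := by rw [ht]; ring
    rw [hab] at hx ⊢
    have hq : x / plpow ℓ p i < a * t * b := Nat.div_lt_of_lt_mul (Nat.mul_comm _ _ ▸ hx)
    have hb : 0 < b := Nat.pos_of_mul_pos_left (Nat.zero_lt_of_lt hq)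
    rw [(Nat.mul_sub_one_sub_div_mod hx).1, (Nat.mul_sub_one_sub_div_mod hq).2,
      if_neg hij.ne]
    have := Nat.mod_lt (x / plpow ℓ p i) hb
    omega
  · have hq : x / plpow ℓ p i < a := Nat.div_lt_of_lt_mul (Nat.mul_comm a _ ▸ hx)
    rw [(Nat.mul_sub_one_sub_div_mod hx).1]
    generalize x / plpow ℓ p i = q at hq ⊢
    rw [Nat.mod_eq_of_lt (show a - 1 - q < _ by omega), Nat.mod_eq_of_lt (show q < _ by omega),
      if_pos rfl]
    omega

end

theorem forall_le_iff_forall_two_mul_le {k m t : ℕ → ℕ} {j : ℕ}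
    (hsum : ∀ i ≤ j, m i + k i = t i) (hzero : ∀ i, j < i → k i = 0) :
    (∀ i, k i ≤ m i) ↔ ∀ i ≤ j, 2 * k i ≤ t i := by
  refine ⟨fun h i hi => ?_, fun h i => ?_⟩
  · have := hsum i hi; have := h i; omega
  · rcases le_or_gt i j with hi | hi
    · have := hsum i hi; have := h i hi; omega
    · simp [hzero i hi]

theorem forall_two_mul_le_ite_iff {ℓ p a j : ℕ} {k : ℕ → ℕ} (ha : j = 0 → a ≤ ℓ) :
    (∀ i ≤ j, 2 * k i ≤ if i = j then a - 1 else plbase ℓ p i - 1) ↔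
      (2 * k 0 ≤ ℓ - 1 ∧ (∀ i, 0 < i → i < j → 2 * k i ≤ p - 1) ∧ 2 * k j ≤ a - 1) := by
  constructor
  · intro h
    refine ⟨?_, fun i hi0 hi => ?_, by simpa using h j le_rfl⟩
    · have h0 := h 0 (Nat.zero_le _)
      split_ifs at h0 with hj
      · have := ha hj.symm; omega
      · simpa [plbase] using h0
    · simpa [hi.ne, hi0.ne', plbase] using h i hi.le
  · rintro ⟨h0, hmid, htop⟩ i hi
    split_ifs with hij
    · exact hij ▸ htop
    · rcases Nat.eq_zero_or_pos i with rfl | hi0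
      · simpa [plbase] using h0
      · simpa [plbase, hi0.ne'] using hmid i hi0 (lt_of_le_of_ne hi hij)

theorem dominance_two_part_eve_general (ℓ p i₁ i₂ a₁ a₂ n : ℕ) (hℓ : 2 ≤ ℓ) (hp : 2 ≤ p)
    (hi : i₂ < i₁) (ha₂ : 1 ≤ a₂)
    (ha₂ℓ : i₂ = 0 → a₂ ≤ ℓ) (ha₂p : 1 ≤ i₂ → a₂ ≤ p)
    (hn : n + 2 = a₁ * plpow ℓ p i₁ + a₂ * plpow ℓ p i₂)
    (k : ℕ) (hk : k ≤ a₂ * plpow ℓ p i₂ - 1) :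
    (∀ i, pldig ℓ p k i ≤ pldig ℓ p (n + 1 - k) i) ↔
      (2 * pldig ℓ p k 0 ≤ ℓ - 1 ∧
       (∀ i, 0 < i → i < i₂ → 2 * pldig ℓ p k i ≤ p - 1) ∧
       2 * pldig ℓ p k i₂ ≤ a₂ - 1) := by
  have hℓ0 : 0 < ℓ := by omega
  have hp0 : 0 < p := by omega
  have ha₂b : a₂ ≤ plbase ℓ p i₂ := by
    unfold plbase; split_ifs with h
    exacts [ha₂ℓ h, ha₂p (by omega)]
  have hkA : k < a₂ * plpow ℓ p i₂ := by
    have := Nat.mul_pos ha₂ (plpow_pos hℓ0 hp0 i₂); omega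
  have hm : n + 1 - k = (a₂ * plpow ℓ p i₂ - 1 - k) + a₁ * plpow ℓ p i₁ := by omega
  rw [hm, ← forall_two_mul_le_ite_iff ha₂ℓ, forall_le_iff_forall_two_mul_le]
  · intro i hi₂
    rw [pldig_add_mul_plpow hℓ0 hp0 (hi₂.trans_lt hi),
      pldig_mul_plpow_sub_one_sub_add_pldig hℓ0 hp0 ha₂b hkA hi₂]
  · intro i hi₂
    apply pldig_eq_zero_of_lt_plpow
    calc k < a₂ * plpow ℓ p i₂ := hkA
      _ ≤ plpow ℓ p (i₂ + 1) := by rw [plpow_succ, Nat.mul_comm]; gcongr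
      _ ≤ plpow ℓ p i := Nat.le_of_dvd (plpow_pos hℓ0 hp0 i) (plpow_dvd_plpow hi₂)

/-- Digit-wise dominance criterion for the two-part Eve composition
`(a₁·p^{(i₁)}−1, a₂·p^{(i₂)}−1)`: with `n+2 = a₁·p^{(i₁)} + a₂·p^{(i₂)}` and
`0 ≤ k ≤ a₂·p^{(i₂)}−1`, one has `(n+1−k) ⊵ k` iff `2k_0 ≤ ℓ−1`,
`2k_i ≤ p−1` for `0 < i < i₂`, and `2k_{i₂} ≤ a₂−1`. -/
theorem dominance_two_part_eve (ℓ p i₁ i₂ a₁ a₂ n : ℕ) (hℓ : 2 ≤ ℓ) (hp : 2 ≤ p)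
    (hi : i₂ < i₁) (ha₁ : 1 ≤ a₁) (ha₂ : 1 ≤ a₂)
    (ha₂ℓ : i₂ = 0 → a₂ ≤ ℓ) (ha₂p : 1 ≤ i₂ → a₂ ≤ p)
    (hn : n + 2 = a₁ * plpow ℓ p i₁ + a₂ * plpow ℓ p i₂)
    (k : ℕ) (hk : k ≤ a₂ * plpow ℓ p i₂ - 1) :
    (∀ i, pldig ℓ p k i ≤ pldig ℓ p (n + 1 - k) i) ↔
      (2 * pldig ℓ p k 0 ≤ ℓ - 1 ∧
       (∀ i, 0 < i → i < i₂ → 2 * pldig ℓ p k i ≤ p - 1) ∧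
       2 * pldig ℓ p k i₂ ≤ a₂ - 1) :=
  dominance_two_part_eve_general ℓ p i₁ i₂ a₁ a₂ n hℓ hp hi ha₂ ha₂ℓ ha₂p hn k hk
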